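/- arXiv:2007.02331 — 3 statements merged into one kernel-verified Lean document; each statement's English description precedes it below -/
import Mathlib

section
/- Let n ≥ 2, 0 < ε ≤ 1, and let ω₀, ω₁ ∈ ℝⁿ be unit vectors with |ω₁ − ω₀| < ε/4. Let ξ₀ ∈ ℝⁿ with ξ₀ ≠ 0 and ξ₀·ω₁ = 0, and let τ₀ ∈ ℝ with |τ₀| < (ε/8)|ξ₀|. Define ω := (τ₀/|ξ₀|²) ξ₀ + √(1 − τ₀²/|ξ₀|²) · ω₁. Then ω is a unit vector, ω·ξ₀ = τ₀, and |ω − ω₀| ≤ ε/2. -/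
open scoped RealInnerProductSpace

private lemma direction_in_cap_aux
    (n : ℕ) (ε : ℝ) (hε0 : 0 < ε)
    (ω₀ ω₁ ξ₀ : EuclideanSpace ℝ (Fin n)) (hω₁ : ‖ω₁‖ = 1)
    (hclose : ‖ω₁ - ω₀‖ < ε / 4) (hperp : ⟪ξ₀, ω₁⟫ = 0)
    (a s τ₀ : ℝ) (hs0 : 0 ≤ s)
    (haτ : a * ‖ξ₀‖ ^ 2 = τ₀)
    (hsum : a ^ 2 * ‖ξ₀‖ ^ 2 + s ^ 2 = 1)
    (hsmall : a ^ 2 * ‖ξ₀‖ ^ 2 ≤ ε ^ 2 / 64) :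
    ‖a • ξ₀ + s • ω₁‖ = 1 ∧ ⟪a • ξ₀ + s • ω₁, ξ₀⟫ = τ₀ ∧
      ‖(a • ξ₀ + s • ω₁) - ω₀‖ ≤ ε / 2 := by
  have hperp' : ⟪ω₁, ξ₀⟫ = 0 := by rw [real_inner_comm]; exact hperp
  have hinner0 : ⟪a • ξ₀, s • ω₁⟫ = 0 := by
    rw [real_inner_smul_left, real_inner_smul_right, hperp]; ring
  have hn1 : ‖a • ξ₀‖ ^ 2 = a ^ 2 * ‖ξ₀‖ ^ 2 := by
    rw [norm_smul, mul_pow, Real.norm_eq_abs, sq_abs]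
  have hn2 : ‖s • ω₁‖ ^ 2 = s ^ 2 := by
    rw [norm_smul, mul_pow, Real.norm_eq_abs, sq_abs, hω₁, one_pow, mul_one]
  have hnormsq : ‖a • ξ₀ + s • ω₁‖ ^ 2 = 1 := by
    rw [norm_add_sq_real, hinner0, hn1, hn2]; linarith
  have hnorm : ‖a • ξ₀ + s • ω₁‖ = 1 := by
    have := norm_nonneg (a • ξ₀ + s • ω₁)
    nlinarith
  refine ⟨hnorm, ?_, ?_⟩
  · simp only [inner_add_left, real_inner_smul_left, hperp', real_inner_self_eq_norm_sq,
      mul_zero, add_zero]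
    exact haτ
  · have hiu : ⟪a • ξ₀ + s • ω₁, ω₁⟫ = s := by
      simp only [inner_add_left, real_inner_smul_left, hperp, real_inner_self_eq_norm_sq,
        mul_zero, zero_add, hω₁]
      ring
    have hs1 : s ≤ 1 := by nlinarith [sq_nonneg a, sq_nonneg ‖ξ₀‖, norm_nonneg ξ₀]
    have hdiff : ‖(a • ξ₀ + s • ω₁) - ω₁‖ ^ 2 ≤ ε ^ 2 / 32 := by
      rw [norm_sub_sq_real, hnormsq, hiu, hω₁]
      nlinarith
    have htri : ‖(a • ξ₀ + s • ω₁) - ω₀‖ ≤ ‖(a • ξ₀ + s • ω₁) - ω₁‖ + ‖ω₁ - ω₀‖ :=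
      norm_sub_le_norm_sub_add_norm_sub _ _ _
    have hd0 : 0 ≤ ‖(a • ξ₀ + s • ω₁) - ω₁‖ := norm_nonneg _
    nlinarith [sq_nonneg (‖(a • ξ₀ + s • ω₁) - ω₁‖ - ε / 4)]

/-- **Explicit construction of a direction in the partial-data cap** (from the proof of
Corollary 2 of the paper): given unit vectors `ω₀, ω₁` with `|ω₁ − ω₀| < ε/4`,
`ξ₀ ⊥ ω₁` nonzero and `|τ₀| < (ε/8)|ξ₀|`, the vector
`ω = (τ₀/|ξ₀|²)ξ₀ + √(1 − τ₀²/|ξ₀|²) ω₁` is a unit vector with `ω·ξ₀ = τ₀` and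
`|ω − ω₀| ≤ ε/2`. -/
theorem direction_in_cap
    (n : ℕ) (hn : 2 ≤ n) (ε : ℝ) (hε0 : 0 < ε) (hε1 : ε ≤ 1)
    (ω₀ ω₁ : EuclideanSpace ℝ (Fin n))
    (hω₀ : ‖ω₀‖ = 1) (hω₁ : ‖ω₁‖ = 1) (hclose : ‖ω₁ - ω₀‖ < ε / 4)
    (ξ₀ : EuclideanSpace ℝ (Fin n)) (hξ₀ : ξ₀ ≠ 0) (hperp : ⟪ξ₀, ω₁⟫ = 0)
    (τ₀ : ℝ) (hτ₀ : |τ₀| < (ε / 8) * ‖ξ₀‖) :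
    ‖(τ₀ / ‖ξ₀‖ ^ 2) • ξ₀ + Real.sqrt (1 - τ₀ ^ 2 / ‖ξ₀‖ ^ 2) • ω₁‖ = 1 ∧
    ⟪(τ₀ / ‖ξ₀‖ ^ 2) • ξ₀ + Real.sqrt (1 - τ₀ ^ 2 / ‖ξ₀‖ ^ 2) • ω₁, ξ₀⟫ = τ₀ ∧
    ‖((τ₀ / ‖ξ₀‖ ^ 2) • ξ₀ + Real.sqrt (1 - τ₀ ^ 2 / ‖ξ₀‖ ^ 2) • ω₁) - ω₀‖ ≤ ε / 2 := by
  have hx : (0:ℝ) < ‖ξ₀‖ := norm_pos_iff.mpr hξ₀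
  have hx2 : (0:ℝ) < ‖ξ₀‖ ^ 2 := by positivity
  have hτsq : τ₀ ^ 2 ≤ ε ^ 2 / 64 * ‖ξ₀‖ ^ 2 := by
    nlinarith [sq_abs τ₀, abs_nonneg τ₀, hτ₀, hε0.le, hx.le]
  have ht1 : τ₀ ^ 2 / ‖ξ₀‖ ^ 2 ≤ 1 := by
    have hε2 : ε ^ 2 ≤ 1 := by nlinarith
    rw [div_le_one hx2]
    nlinarith [mul_le_mul_of_nonneg_right hε2 hx2.le]
  have hssq : Real.sqrt (1 - τ₀ ^ 2 / ‖ξ₀‖ ^ 2) ^ 2 = 1 - τ₀ ^ 2 / ‖ξ₀‖ ^ 2 :=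
    Real.sq_sqrt (by linarith)
  refine direction_in_cap_aux n ε hε0 ω₀ ω₁ ξ₀ hω₁ hclose hperp _ _ τ₀
    (Real.sqrt_nonneg _) (div_mul_cancel₀ τ₀ (ne_of_gt hx2)) ?_ ?_
  · rw [hssq]; field_simp; ring
  · rw [div_pow, div_mul_eq_mul_div, div_le_iff₀ (by positivity)]
    nlinarith
end

section
/- Let n ≥ 3, r > 0 and τ ∈ ℝ. Let ω̃¹,…,ω̃^{n−1} ∈ ℝ^{n−1} be pairwise orthogonal vectors each of Euclidean norm r, and define ω̃ⁿ := (ω̃^{n−2} + ω̃^{n−1})/√2. For 1 ≤ k ≤ n set vᵏ := (1, −ω̃ᵏ, −τ) ∈ ℝ^{n+1} (the vector (1, −ωᵏ) where ωᵏ = (ω̃ᵏ, τ) ∈ ℝⁿ). Then the Gram determinant det[ (vⁱ·vʲ) ]_{1 ≤ i,j ≤ n} equals (1 + τ²)(√2 − 1)² r^{2(n−1)}. In particular it is strictly positive, so v¹,…,vⁿ are linearly independent. -/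
/-!
Write `vᵏ = (0, -ω̃ᵏ, 0) + e` with `e = (1, 0, -τ)`, which is orthogonal to every `(0, -ω̃ᵏ, 0)`.
Replacing the dependent vector `ω̃ⁿ = ∑ aⱼ ω̃ʲ` by `e` gives an orthogonal family `p`, and
`v = S p` for a matrix `S = 1 + (rank two)`. Hence the Gram determinant of `v` is
`det S ² · ∏ ‖pₖ‖²`, and `det S = 1 - ∑ aⱼ = 1 - √2` by `det (1 + U V) = det (1 + V U)`.
-/

open scoped RealInnerProductSpace
open Matrix

section EuclideanModel

variable {ι E : Type*} [NormedAddCommGroup E] [InnerProductSpace ℝ E]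

variable (E) in
def prodL2Equiv : (ℝ × E × ℝ) ≃ₗ[ℝ] WithLp 2 (ℝ × WithLp 2 (E × ℝ)) :=
  (LinearEquiv.prodCongr (LinearEquiv.refl ℝ ℝ) (WithLp.linearEquiv 2 ℝ (E × ℝ)).symm).trans
    (WithLp.linearEquiv 2 ℝ (ℝ × WithLp 2 (E × ℝ))).symm

theorem inner_prodL2Equiv (x y : ℝ × E × ℝ) :
    ⟪prodL2Equiv E x, prodL2Equiv E y⟫ = x.1 * y.1 + ⟪x.2.1, y.2.1⟫ + x.2.2 * y.2.2 := by
  simp [prodL2Equiv]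
  ring

theorem norm_sq_prodL2Equiv (x : ℝ × E × ℝ) :
    ‖prodL2Equiv E x‖ ^ 2 = x.1 ^ 2 + ‖x.2.1‖ ^ 2 + x.2.2 ^ 2 := by
  rw [← real_inner_self_eq_norm_sq, inner_prodL2Equiv, real_inner_self_eq_norm_sq]
  ring

theorem gram_prodL2Equiv_one_neg_neg (W : ι → E) (τ : ℝ) :
    gram ℝ (fun k => prodL2Equiv E (1, -W k, -τ)) = of fun i j => 1 + τ ^ 2 + ⟪W i, W j⟫ := by
  ext i j
  simp only [gram_apply, inner_prodL2Equiv, of_apply, inner_neg_neg]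
  ring

end EuclideanModel

namespace Matrix

variable {ι E : Type*} [Fintype ι] [NormedAddCommGroup E] [InnerProductSpace ℝ E]

theorem gram_sum_smul (S : Matrix ι ι ℝ) (v : ι → E) :
    gram ℝ (fun i => ∑ j, S i j • v j) = S * gram ℝ v * Sᵀ := by
  ext i j
  simp only [gram_apply, mul_apply, transpose_apply, sum_inner, inner_sum, real_inner_smul_left,
    real_inner_smul_right, Finset.sum_mul]
  refine Finset.sum_congr rfl fun k _ => Finset.sum_congr rfl fun l _ => ?_
  rw [real_inner_comm]
  ring

variable [DecidableEq ι]

theorem det_gram_sum_smul (S : Matrix ι ι ℝ) (v : ι → E) :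
    (gram ℝ (fun i => ∑ j, S i j • v j)).det = S.det ^ 2 * (gram ℝ v).det := by
  rw [gram_sum_smul, det_mul, det_mul, det_transpose]
  ring

theorem det_gram_of_pairwise_inner_eq_zero {v : ι → E}
    (hv : Pairwise fun i j => ⟪v i, v j⟫ = 0) : (gram ℝ v).det = ∏ i, ‖v i‖ ^ 2 := by
  have hdiag : gram ℝ v = diagonal fun i => ‖v i‖ ^ 2 := by
    ext i j
    rcases eq_or_ne i j with rfl | hij
    · simp
    · simp [hv hij, hij]
  rw [hdiag, det_diagonal]

theorem det_one_add_vecMulVec_add_vecMulVec {R : Type*} [CommRing R] (u₁ b₁ u₂ b₂ : ι → R) :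
    (1 + vecMulVec u₁ b₁ + vecMulVec u₂ b₂).det
      = (1 + b₁ ⬝ᵥ u₁) * (1 + b₂ ⬝ᵥ u₂) - (b₁ ⬝ᵥ u₂) * (b₂ ⬝ᵥ u₁) := by
  have hUV : vecMulVec u₁ b₁ + vecMulVec u₂ b₂
      = of (fun i k => ![u₁ i, u₂ i] k) * of ![b₁, b₂] := by
    ext i j
    simp [vecMulVec_apply, mul_apply, Fin.sum_univ_two]
  have hVU : (1 : Matrix (Fin 2) (Fin 2) R) + of ![b₁, b₂] * of (fun i k => ![u₁ i, u₂ i] k)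
      = !![1 + b₁ ⬝ᵥ u₁, b₁ ⬝ᵥ u₂; b₂ ⬝ᵥ u₁, 1 + b₂ ⬝ᵥ u₂] := by
    ext i j
    fin_cases i <;> fin_cases j <;> simp [vecMul, dotProduct, mul_comm]
  rw [add_assoc, hUV, det_one_add_mul_comm, hVU, det_fin_two_of]

theorem det_gram_add_smul_add_smul (v : ι → E) (u₁ b₁ u₂ b₂ : ι → ℝ) :
    (gram ℝ fun i => v i + u₁ i • ∑ j, b₁ j • v j + u₂ i • ∑ j, b₂ j • v j).det
      = ((1 + b₁ ⬝ᵥ u₁) * (1 + b₂ ⬝ᵥ u₂) - (b₁ ⬝ᵥ u₂) * (b₂ ⬝ᵥ u₁)) ^ 2 * (gram ℝ v).det := by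
  have hv : (fun i => v i + u₁ i • ∑ j, b₁ j • v j + u₂ i • ∑ j, b₂ j • v j)
      = fun i => ∑ j, (1 + vecMulVec u₁ b₁ + vecMulVec u₂ b₂) i j • v j := by
    funext i
    simp only [add_apply, one_apply, vecMulVec_apply, add_smul, Finset.sum_add_distrib, ite_smul,
      one_smul, zero_smul, Finset.sum_ite_eq, Finset.mem_univ, if_true, mul_smul, Finset.smul_sum]
  rw [hv, det_gram_sum_smul, det_one_add_vecMulVec_add_vecMulVec]

theorem det_gram_add_of_eq_sum {W : ι → E} {e : E} {i₀ : ι}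
    (hW : ∀ i j, i ≠ j → i ≠ i₀ → j ≠ i₀ → ⟪W i, W j⟫ = 0) (he : ∀ i, i ≠ i₀ → ⟪W i, e⟫ = 0)
    {a : ι → ℝ} (ha : a i₀ = 0) (hWi₀ : W i₀ = ∑ j, a j • W j) :
    (gram ℝ fun i => W i + e).det
      = (1 - ∑ j, a j) ^ 2 * ‖e‖ ^ 2 * ∏ i ∈ Finset.univ.erase i₀, ‖W i‖ ^ 2 := by
  set p : ι → E := fun i => if i = i₀ then e else W i with hp
  set δ : ι → ℝ := Pi.single i₀ 1 with hδ
  have hδp : ∑ j, δ j • p j = e := by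
    rw [Fintype.sum_eq_single i₀ fun j hj => by simp [hδ, hj]]
    simp [hδ, hp]
  have hap : ∑ j, a j • p j = W i₀ := by
    rw [hWi₀]
    refine Finset.sum_congr rfl fun j _ => ?_
    rcases eq_or_ne j i₀ with rfl | hj
    · simp [ha]
    · simp [hp, hj]
  have hq : (fun i => W i + e)
      = fun i => p i + (1 - δ) i • ∑ j, δ j • p j + δ i • ∑ j, a j • p j := by
    funext i
    rw [hap, hδp]
    rcases eq_or_ne i i₀ with rfl | hi
    · simp [hp, hδ, add_comm]
    · simp [hp, hδ, hi]
  have hp_orth : Pairwise fun i j => ⟪p i, p j⟫ = 0 := by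
    intro i j hij
    rcases eq_or_ne i i₀ with rfl | hi
    · simpa [hp, Ne.symm hij, real_inner_comm] using he j (Ne.symm hij)
    rcases eq_or_ne j i₀ with rfl | hj
    · simp [hp, hi, he i hi]
    · simp [hp, hi, hj, hW i j hij hi hj]
  have hcoeff : (1 + δ ⬝ᵥ (1 - δ)) * (1 + a ⬝ᵥ δ) - δ ⬝ᵥ δ * a ⬝ᵥ (1 - δ) = 1 - ∑ j, a j := by
    simp [hδ, ha, dotProduct_sub, dotProduct_one]
  have hprod : ∏ i ∈ Finset.univ.erase i₀, ‖p i‖ ^ 2 = ∏ i ∈ Finset.univ.erase i₀, ‖W i‖ ^ 2 :=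
    Finset.prod_congr rfl fun i hi => by simp [hp, Finset.ne_of_mem_erase hi]
  rw [hq, det_gram_add_smul_add_smul, hcoeff, det_gram_of_pairwise_inner_eq_zero hp_orth,
    ← Finset.mul_prod_erase _ _ (Finset.mem_univ i₀), hprod]
  simp only [hp, if_pos]
  ring

end Matrix

section NullVectors

variable {ι E : Type*} [Fintype ι] [DecidableEq ι] [NormedAddCommGroup E]
  [InnerProductSpace ℝ E]

theorem det_one_add_sq_add_inner_of_eq_sum {W : ι → E} {i₀ : ι}
    (hW : ∀ i j, i ≠ j → i ≠ i₀ → j ≠ i₀ → ⟪W i, W j⟫ = 0)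
    {a : ι → ℝ} (ha : a i₀ = 0) (hWi₀ : W i₀ = ∑ j, a j • W j) (τ : ℝ) :
    (of fun i j => 1 + τ ^ 2 + ⟪W i, W j⟫).det
      = (1 - ∑ j, a j) ^ 2 * (1 + τ ^ 2) * ∏ i ∈ Finset.univ.erase i₀, ‖W i‖ ^ 2 := by
  have hsplit : ∀ k, prodL2Equiv E (1, -W k, -τ)
      = prodL2Equiv E (0, -W k, 0) + prodL2Equiv E (1, 0, -τ) := fun k => by
    rw [← map_add]
    simp
  have hW' : ∀ i j, i ≠ j → i ≠ i₀ → j ≠ i₀ →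
      ⟪prodL2Equiv E (0, -W i, 0), prodL2Equiv E (0, -W j, 0)⟫ = 0 := fun i j hij hi hj => by
    simp only [inner_prodL2Equiv, inner_neg_neg, hW i j hij hi hj]
    ring
  have he : ∀ i, i ≠ i₀ → ⟪prodL2Equiv E (0, -W i, 0), prodL2Equiv E (1, 0, -τ)⟫ = 0 :=
    fun i _ => by
      simp only [inner_prodL2Equiv, inner_zero_right]
      ring
  have hWi₀' : prodL2Equiv E (0, -W i₀, 0) = ∑ j, a j • prodL2Equiv E (0, -W j, 0) := by
    simp [hWi₀, ← map_smul, ← map_sum, Prod.ext_iff, Prod.fst_sum, Prod.snd_sum]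
  rw [← gram_prodL2Equiv_one_neg_neg, funext hsplit,
    det_gram_add_of_eq_sum hW' he ha hWi₀', norm_sq_prodL2Equiv]
  simp [norm_sq_prodL2Equiv]

theorem linearIndependent_one_neg_neg_of_det_ne_zero (W : ι → E) (τ : ℝ)
    (h : (of fun i j => 1 + τ ^ 2 + ⟪W i, W j⟫).det ≠ 0) :
    LinearIndependent ℝ fun k => ((1 : ℝ), -W k, -τ) := by
  rw [← gram_prodL2Equiv_one_neg_neg] at h
  exact .of_comp (prodL2Equiv E).toLinearMap (linearIndependent_of_det_gram_ne_zero h)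

end NullVectors

section ExtendLast

variable {α : Type*} {n : ℕ}

def extendLast (w : Fin (n - 1) → α) (x : α) : Fin n → α :=
  fun k => if h : (k : ℕ) < n - 1 then w ⟨k, h⟩ else x

theorem extendLast_of_lt (w : Fin (n - 1) → α) (x : α) {k : Fin n} (h : (k : ℕ) < n - 1) :
    extendLast w x k = w ⟨k, h⟩ :=
  dif_pos h

theorem extendLast_last (hn : 0 < n) (w : Fin (n - 1) → α) (x : α) :
    extendLast w x ⟨n - 1, Nat.sub_one_lt_of_lt hn⟩ = x :=
  dif_neg (lt_irrefl _)

theorem sum_extendLast_zero [AddCommMonoid α] (f : Fin (n - 1) → α) :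
    ∑ k, extendLast f 0 k = ∑ j, f j := by
  refine (Fintype.sum_of_injective (Fin.castLE (Nat.sub_le n 1)) (Fin.castLE_injective _) _ _
    (fun k hk => dif_neg fun h => hk ⟨⟨k, h⟩, rfl⟩) fun j => ?_).symm
  exact (extendLast_of_lt f 0 (k := Fin.castLE _ j) j.isLt).symm

end ExtendLast

theorem det_one_add_sq_add_inner_extendLast {E : Type*} [NormedAddCommGroup E]
    [InnerProductSpace ℝ E] {n : ℕ} (hn : 0 < n) {w : Fin (n - 1) → E} {r : ℝ}
    (horth : ∀ i j, i ≠ j → ⟪w i, w j⟫ = 0) (hnorm : ∀ i, ‖w i‖ = r)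
    {a : Fin (n - 1) → ℝ} {x : E} (hx : x = ∑ j, a j • w j) (τ : ℝ) :
    (of fun i j => 1 + τ ^ 2 + ⟪extendLast w x i, extendLast w x j⟫).det
      = (1 - ∑ j, a j) ^ 2 * (1 + τ ^ 2) * r ^ (2 * (n - 1)) := by
  set L : Fin n := ⟨n - 1, Nat.sub_one_lt_of_lt hn⟩
  have hlt : ∀ i : Fin n, i ≠ L → (i : ℕ) < n - 1 := fun i hi => by
    have hne : (i : ℕ) ≠ n - 1 := fun h => hi (Fin.ext h)
    omega
  have hW : ∀ i j, i ≠ j → i ≠ L → j ≠ L → ⟪extendLast w x i, extendLast w x j⟫ = 0 :=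
    fun i j hij hi hj => by
      rw [extendLast_of_lt w x (hlt i hi), extendLast_of_lt w x (hlt j hj)]
      exact horth _ _ fun h => hij (Fin.ext (Fin.mk.inj_iff.mp h))
  have hWL : extendLast w x L = ∑ k, extendLast a 0 k • extendLast w x k := by
    rw [extendLast_last hn, hx, ← sum_extendLast_zero]
    refine Finset.sum_congr rfl fun k _ => ?_
    simp only [extendLast]
    split_ifs <;> simp
  have hprod : ∏ i ∈ Finset.univ.erase L, ‖extendLast w x i‖ ^ 2 = r ^ (2 * (n - 1)) := by
    rw [Finset.prod_congr rfl fun i hi => by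
        rw [extendLast_of_lt w x (hlt i (Finset.ne_of_mem_erase hi)), hnorm],
      Finset.prod_const, Finset.card_erase_of_mem (Finset.mem_univ _), Finset.card_univ,
      Fintype.card_fin, ← pow_mul]
  rw [det_one_add_sq_add_inner_of_eq_sum hW (extendLast_last hn a 0) hWL, sum_extendLast_zero,
    hprod]

/-- **Gram determinant computation** (key step in the proof of Lemma 4 of the paper):
for pairwise orthogonal vectors `ω̃¹,…,ω̃^{n−1}` of norm `r` in `ℝ^{n−1}` and
`ω̃ⁿ = (ω̃^{n−2} + ω̃^{n−1})/√2`, the Gram determinant of the vectors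
`vᵏ = (1, −ω̃ᵏ, −τ)`, whose pairwise inner products are `1 + τ² + ω̃ⁱ·ω̃ʲ`, equals
`(1 + τ²)(√2 − 1)² r^{2(n−1)}`; in particular it is positive and the `vᵏ` are
linearly independent. -/
theorem gram_determinant_null_vectors
    (n : ℕ) (hn : 3 ≤ n) (r : ℝ) (hr : 0 < r) (τ : ℝ)
    (w : Fin (n - 1) → EuclideanSpace ℝ (Fin (n - 1)))
    (horth : ∀ i j, i ≠ j → ⟪w i, w j⟫ = 0)
    (hnorm : ∀ i, ‖w i‖ = r) :
    let W : Fin n → EuclideanSpace ℝ (Fin (n - 1)) := fun k =>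
      if h : (k : ℕ) < n - 1 then w ⟨k, h⟩
      else (Real.sqrt 2)⁻¹ • (w ⟨n - 3, by omega⟩ + w ⟨n - 2, by omega⟩)
    Matrix.det (Matrix.of fun i j : Fin n => 1 + τ ^ 2 + ⟪W i, W j⟫)
        = (1 + τ ^ 2) * (Real.sqrt 2 - 1) ^ 2 * r ^ (2 * (n - 1)) ∧
      LinearIndependent ℝ
        (fun k : Fin n =>
          ((1 : ℝ), -W k, -τ) : Fin n → ℝ × EuclideanSpace ℝ (Fin (n - 1)) × ℝ) := by
  intro W
  set a : Fin (n - 1) → ℝ :=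
    (Real.sqrt 2)⁻¹ • (Pi.single ⟨n - 3, by omega⟩ 1 + Pi.single ⟨n - 2, by omega⟩ 1)
  have hx : (Real.sqrt 2)⁻¹ • (w ⟨n - 3, by omega⟩ + w ⟨n - 2, by omega⟩) = ∑ j, a j • w j := by
    simp [a, add_smul, Finset.sum_add_distrib, Pi.single_apply]
  have hsum : ∑ j, a j = Real.sqrt 2 := by
    simp only [a, Pi.smul_apply, Pi.add_apply, smul_eq_mul, ← Finset.mul_sum,
      Finset.sum_add_distrib, Finset.sum_pi_single', Finset.mem_univ, if_true, ← two_mul, mul_one]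
    rw [← div_eq_inv_mul, Real.div_sqrt]
  have hdet : (of fun i j => 1 + τ ^ 2 + ⟪W i, W j⟫).det
      = (1 + τ ^ 2) * (Real.sqrt 2 - 1) ^ 2 * r ^ (2 * (n - 1)) := by
    have h := det_one_add_sq_add_inner_extendLast (by omega) horth hnorm hx τ
    rw [hsum] at h
    exact h.trans (by ring)
  have hsqrt : Real.sqrt 2 - 1 ≠ 0 := sub_ne_zero.mpr (by norm_num)
  refine ⟨hdet, linearIndependent_one_neg_neg_of_det_ne_zero W τ ?_⟩
  rw [hdet]
  exact mul_ne_zero (mul_ne_zero (by positivity) (pow_ne_zero _ hsqrt)) (pow_ne_zero _ hr.ne')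
end

section
/- Let n ≥ 2, 0 < ε ≤ 1, T > 0, let Ω ⊂ ℝⁿ be a bounded open set, and let ω₀ ∈ ℝⁿ be a unit vector. Let A = (A₀,…,A_n) : ℝ^{1+n} → ℝ^{n+1} be continuous with support contained in (0,T)×Ω, and let δ ≥ 0 be such that for every unit vector ω ∈ ℝⁿ with |ω − ω₀| < ε/2 and every x ∈ ℝⁿ, | ∫_ℝ (1,−ω)·A(s, x − sω) ds | ≤ δ. Then for every τ ∈ ℝ and ξ ∈ ℝⁿ such that ξ ≠ 0, |τ| < (ε/8)|ξ|, and ξ·ω₁ = 0 for some unit vector ω₁ with |ω₁ − ω₀| < ε/4, there exists a unit vector ω ∈ ℝⁿ with |ω − ω₀| ≤ ε/2 and ω·ξ = τ such that | (1,−ω)·Â(τ,ξ) | ≤ μ(Ω_T) · δ, where Â denotes the space-time Fourier transform Â(τ,ξ) = ∫_{ℝ^{1+n}} e^{−i(sτ + y·ξ)} A(s,y) dy ds (applied componentwise) and μ(Ω_T) is the Lebesgue measure of Ω_T = { x ∈ ℝⁿ : dist(x, Ω) ≤ T }. -/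
open MeasureTheory
open scoped RealInnerProductSpace

/-!
Choose `ω` on the unit sphere with `⟪ω, ξ⟫ = τ` by tilting `ω₁` towards `ξ`; since `|τ| / ‖ξ‖`
is small, `ω` stays in the cap around `ω₀`. On the hyperplane `τ = ⟪ω, ξ⟫` the phase
`sτ + ⟪y, ξ⟫` is constant along the light rays `s ↦ (s, x + sω)`, so after the shear
`y = x - sω` and Fubini, `(1,−ω)·Â(τ,ξ)` becomes the spatial Fourier transform of the light-ray
transform of `(1,−ω)·A` in the direction `ω`. That transform is bounded by `δ` and vanishes
outside the closed `T`-thickening of `Ω`, which gives the bound `μ(Ω_T) δ`.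
-/

open Function Metric Set

section Geometry

variable {E : Type*} [NormedAddCommGroup E] [InnerProductSpace ℝ E]

theorem exists_norm_eq_one_inner_eq_of_inner_eq_zero {ξ ω₁ : E} (hξ : ξ ≠ 0) (hω₁ : ‖ω₁‖ = 1)
    (hperp : ⟪ξ, ω₁⟫ = 0) {τ : ℝ} (hτ : |τ| ≤ ‖ξ‖) :
    ∃ ω : E, ‖ω‖ = 1 ∧ ⟪ω, ξ⟫ = τ ∧ ‖ω - ω₁‖ ≤ 2 * |τ| / ‖ξ‖ := by
  have hξ_pos : 0 < ‖ξ‖ := norm_pos_iff.mpr hξ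
  set u : E := ‖ξ‖⁻¹ • ξ
  set a : ℝ := τ / ‖ξ‖
  set c : ℝ := √(1 - a ^ 2)
  have hu : ‖u‖ = 1 := norm_smul_inv_norm hξ
  have hu_inner : ⟪u, ξ⟫ = ‖ξ‖ := by
    rw [real_inner_smul_left, real_inner_self_eq_norm_sq]; field_simp
  have hω₁u : ⟪c • ω₁, a • u⟫ = 0 := by
    rw [real_inner_smul_left, real_inner_smul_right, real_inner_smul_right, real_inner_comm,
      hperp]; simp
  have ha : |a| ≤ 1 := by rwa [abs_div, abs_norm, div_le_one hξ_pos]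
  have hc_sq : c ^ 2 = 1 - a ^ 2 := Real.sq_sqrt (by nlinarith [sq_abs a, abs_nonneg a])
  have hc_nonneg : 0 ≤ c := Real.sqrt_nonneg _
  have hc_le : c ≤ 1 := by nlinarith [sq_nonneg a]
  refine ⟨c • ω₁ + a • u, ?_, ?_, ?_⟩
  · have h := norm_add_sq_eq_norm_sq_add_norm_sq_real hω₁u
    rw [norm_smul, norm_smul, hω₁, hu, Real.norm_of_nonneg hc_nonneg, Real.norm_eq_abs] at h
    nlinarith [sq_abs a, norm_nonneg (c • ω₁ + a • u)]
  · rw [inner_add_left, real_inner_smul_left, real_inner_smul_left, real_inner_comm, hperp,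
      hu_inner, mul_zero, zero_add]
    exact div_mul_cancel₀ τ hξ_pos.ne'
  · calc ‖c • ω₁ + a • u - ω₁‖ = ‖(c - 1) • ω₁ + a • u‖ := by rw [sub_smul, one_smul]; abel_nf
      _ ≤ ‖(c - 1) • ω₁‖ + ‖a • u‖ := norm_add_le _ _
      _ = (1 - c) + |a| := by
        rw [norm_smul, norm_smul, hω₁, hu, Real.norm_eq_abs, Real.norm_eq_abs,
          abs_of_nonpos (by linarith)]; ring
      -- `1 - c ≤ 1 - c ^ 2 = a ^ 2 ≤ |a|`
      _ ≤ 2 * |a| := by nlinarith [sq_abs a, abs_nonneg a]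
      _ = 2 * |τ| / ‖ξ‖ := by rw [abs_div, abs_norm]; ring

theorem exists_norm_eq_one_inner_eq_of_norm_sub_lt {ξ ω₀ ω₁ : E} {ε τ : ℝ} (hε : ε ≤ 1)
    (hξ : ξ ≠ 0) (hω₁ : ‖ω₁‖ = 1) (hω₁ω₀ : ‖ω₁ - ω₀‖ < ε / 4) (hperp : ⟪ξ, ω₁⟫ = 0)
    (hτ : |τ| < ε / 8 * ‖ξ‖) :
    ∃ ω : E, ‖ω‖ = 1 ∧ ⟪ω, ξ⟫ = τ ∧ ‖ω - ω₀‖ < ε / 2 := by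
  have hξ_pos : 0 < ‖ξ‖ := norm_pos_iff.mpr hξ
  obtain ⟨ω, hω, hωξ, hωω₁⟩ :=
    exists_norm_eq_one_inner_eq_of_inner_eq_zero hξ hω₁ hperp (hτ.le.trans (by nlinarith))
  refine ⟨ω, hω, hωξ, ?_⟩
  calc ‖ω - ω₀‖ ≤ ‖ω - ω₁‖ + ‖ω₁ - ω₀‖ := norm_sub_le_norm_sub_add_norm_sub _ _ _
    _ < ε / 4 + ε / 4 :=
      add_lt_add_of_le_of_lt (hωω₁.trans ((div_le_iff₀ hξ_pos).2 (by linarith))) hω₁ω₀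
    _ = ε / 2 := by ring

end Geometry

noncomputable section LightRay

variable {E : Type*} [NormedAddCommGroup E] [NormedSpace ℝ E]

def lightRayTransform (g : ℝ × E → ℝ) (ω x : E) : ℝ :=
  ∫ s, g (s, x - s • ω)

theorem lightRayTransform_eq_zero_of_notMem_cthickening {g : ℝ × E → ℝ} {T : ℝ} {Ω : Set E}
    (hg : support g ⊆ Icc 0 T ×ˢ Ω) {ω x : E} (hω : ‖ω‖ ≤ 1) (hx : x ∉ cthickening T Ω) :
    lightRayTransform g ω x = 0 := by
  have hzero : ∀ s, g (s, x - s • ω) = 0 := by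
    intro s
    by_contra hs
    obtain ⟨⟨hs₀, hsT⟩, hy⟩ := hg hs
    refine hx (mem_cthickening_of_dist_le x _ T Ω hy ?_)
    calc dist x (x - s • ω) = |s| * ‖ω‖ := by
          rw [dist_eq_norm, sub_sub_cancel, norm_smul, Real.norm_eq_abs]
      _ ≤ T := by rw [abs_of_nonneg hs₀]; nlinarith [norm_nonneg ω]
  simp [lightRayTransform, hzero]

variable [MeasurableSpace E] [BorelSpace E] [SecondCountableTopology E]
  (μ : Measure E) [SFinite μ] [μ.IsAddRightInvariant]

theorem measurePreserving_shear (ω : E) :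
    MeasurePreserving (fun p : ℝ × E => (p.1, p.2 - p.1 • ω))
      ((volume : Measure ℝ).prod μ) ((volume : Measure ℝ).prod μ) :=
  (MeasurePreserving.id volume).skew_product
    (continuous_snd.sub (continuous_fst.smul continuous_const)).measurable
    (ae_of_all _ fun s => map_sub_right_eq_self μ (s • ω))

theorem integral_prod_eq_integral_integral_shear {G : Type*} [NormedAddCommGroup G]
    [NormedSpace ℝ G] {F : ℝ × E → G} (hF : Integrable F ((volume : Measure ℝ).prod μ))
    (ω : E) :
    ∫ p, F p ∂(volume : Measure ℝ).prod μ = ∫ x, ∫ s, F (s, x - s • ω) ∂volume ∂μ := by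
  have hF_shear := (measurePreserving_shear μ ω).integrable_comp_of_integrable hF
  calc ∫ p, F p ∂(volume : Measure ℝ).prod μ = ∫ s, ∫ y, F (s, y) ∂μ := integral_prod F hF
    _ = ∫ s, ∫ x, F (s, x - s • ω) ∂μ := by
      congr with s
      exact (integral_sub_right_eq_self (fun y => F (s, y)) (s • ω)).symm
    _ = ∫ x, ∫ s, F (s, x - s • ω) ∂volume ∂μ :=
      (integral_prod _ hF_shear).symm.trans (integral_prod_symm _ hF_shear)

end LightRay

section FourierSlice

variable {E : Type*} [NormedAddCommGroup E] [InnerProductSpace ℝ E] [MeasurableSpace E]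
  (μ : Measure E)

theorem norm_exp_neg_I_mul_ofReal (r : ℝ) : ‖Complex.exp (-Complex.I * r)‖ = 1 := by
  rw [neg_mul, ← mul_neg, ← Complex.ofReal_neg, Complex.norm_exp_I_mul_ofReal]

theorem integral_exp_mul_eq_integral_exp_mul_lightRayTransform [BorelSpace E]
    [SecondCountableTopology E] [SFinite μ] [μ.IsAddRightInvariant] {g : ℝ × E → ℝ}
    (hg : Integrable g ((volume : Measure ℝ).prod μ)) {ω ξ : E} {τ : ℝ} (hωξ : ⟪ω, ξ⟫ = τ) :
    ∫ p, Complex.exp (-Complex.I * ((p.1 * τ + ⟪p.2, ξ⟫ : ℝ) : ℂ)) * (g p : ℂ)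
        ∂(volume : Measure ℝ).prod μ =
      ∫ x, Complex.exp (-Complex.I * (⟪x, ξ⟫ : ℂ)) * (lightRayTransform g ω x : ℂ) ∂μ := by
  have hF : Integrable (fun p : ℝ × E =>
      Complex.exp (-Complex.I * ((p.1 * τ + ⟪p.2, ξ⟫ : ℝ) : ℂ)) * (g p : ℂ))
      ((volume : Measure ℝ).prod μ) :=
    hg.ofReal.bdd_mul (c := 1)
      (by fun_prop : Continuous fun p : ℝ × E =>
        Complex.exp (-Complex.I * ((p.1 * τ + ⟪p.2, ξ⟫ : ℝ) : ℂ))).aestronglyMeasurable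
      (ae_of_all _ fun _ => (norm_exp_neg_I_mul_ofReal _).le)
  rw [integral_prod_eq_integral_integral_shear μ hF ω]
  congr with x
  have hphase : ∀ s : ℝ, s * τ + ⟪x - s • ω, ξ⟫ = ⟪x, ξ⟫ := fun s => by
    rw [inner_sub_left, real_inner_smul_left, hωξ]; ring
  simp only [hphase, lightRayTransform, integral_const_mul]
  exact congrArg _ integral_ofReal

theorem norm_integral_exp_mul_lightRayTransform_le [ProperSpace E] [IsFiniteMeasureOnCompacts μ]
    {g : ℝ × E → ℝ} {T : ℝ} {Ω : Set E} (hg : support g ⊆ Icc 0 T ×ˢ Ω)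
    (hΩ : Bornology.IsBounded Ω) {ω : E} (hω : ‖ω‖ ≤ 1) {δ : ℝ}
    (hδ : ∀ x, |lightRayTransform g ω x| ≤ δ) (ξ : E) :
    ‖∫ x, Complex.exp (-Complex.I * (⟪x, ξ⟫ : ℂ)) * (lightRayTransform g ω x : ℂ) ∂μ‖ ≤
      δ * μ.real (cthickening T Ω) := by
  rw [← setIntegral_eq_integral_of_forall_compl_eq_zero fun x hx => by
    simp [lightRayTransform_eq_zero_of_notMem_cthickening hg hω hx]]
  refine norm_setIntegral_le_of_norm_le_const hΩ.cthickening.measure_lt_top fun x _ => ?_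
  rw [norm_mul, norm_exp_neg_I_mul_ofReal, one_mul, Complex.norm_real]
  exact hδ x

end FourierSlice

section Thickening

variable {X : Type*} [PseudoMetricSpace X]

theorem setOf_infDist_le_eq_cthickening {Ω : Set X} (hΩ : Ω.Nonempty) {T : ℝ} (hT : 0 ≤ T) :
    {x | infDist x Ω ≤ T} = cthickening T Ω := by
  ext x
  rw [mem_ofPred_eq, mem_cthickening_iff, ENNReal.le_ofReal_iff_toReal_le (infEDist_ne_top hΩ) hT,
    infDist]

/-- Not an equality: `infDist x ∅ = 0`, so for `Ω = ∅` the right-hand set is `univ`. -/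
theorem measureReal_cthickening_le_measureReal_setOf_infDist_le [MeasurableSpace X]
    (μ : Measure X) (Ω : Set X) {T : ℝ} (hT : 0 ≤ T) :
    μ.real (cthickening T Ω) ≤ μ.real {x | infDist x Ω ≤ T} := by
  rcases Ω.eq_empty_or_nonempty with rfl | hne
  · simp
  · rw [setOf_infDist_le_eq_cthickening hne hT]

end Thickening

section NullComponent

variable {n : ℕ} {Y : Type*}

/-- The paper's `(1,−ω)·A`. -/
def nullComponent (A : Fin (n + 1) → Y → ℝ) (ω : EuclideanSpace ℝ (Fin n)) (p : Y) : ℝ :=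
  A 0 p - ∑ k : Fin n, ω k * A k.succ p

theorem continuous_nullComponent [TopologicalSpace Y] {A : Fin (n + 1) → Y → ℝ}
    (hA : ∀ i, Continuous (A i)) (ω : EuclideanSpace ℝ (Fin n)) :
    Continuous (nullComponent A ω) :=
  (hA 0).sub (continuous_finsetSum _ fun k _ => continuous_const.mul (hA k.succ))

theorem support_nullComponent_subset {A : Fin (n + 1) → Y → ℝ} {s : Set Y}
    (hA : ∀ i, support (A i) ⊆ s) (ω : EuclideanSpace ℝ (Fin n)) :
    support (nullComponent A ω) ⊆ s := by
  intro p hp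
  by_contra hps
  have hzero : ∀ i, A i p = 0 := fun i => notMem_support.mp fun hi => hps (hA i hi)
  simp [nullComponent, hzero] at hp

end NullComponent

theorem lightray_bound_implies_fourier_bound_general
    (n : ℕ) (ε : ℝ) (hε1 : ε ≤ 1)
    (T : ℝ) (hT : 0 < T)
    (Ω : Set (EuclideanSpace ℝ (Fin n)))
    (hΩbdd : Bornology.IsBounded Ω)
    (ω₀ : EuclideanSpace ℝ (Fin n))
    (A : Fin (n + 1) → ℝ × EuclideanSpace ℝ (Fin n) → ℝ)
    (hA : ∀ i, Continuous (A i))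
    (hAsupp : ∀ i, tsupport (A i) ⊆ Set.Ioo (0 : ℝ) T ×ˢ Ω)
    (δ : ℝ) (hδ : 0 ≤ δ)
    (hray : ∀ ω : EuclideanSpace ℝ (Fin n), ‖ω‖ = 1 → ‖ω - ω₀‖ < ε / 2 →
      ∀ x : EuclideanSpace ℝ (Fin n),
        |∫ s : ℝ, (A 0 (s, x - s • ω) - ∑ k : Fin n, ω k * A k.succ (s, x - s • ω))| ≤ δ) :
    ∀ (τ : ℝ) (ξ : EuclideanSpace ℝ (Fin n)),
      ξ ≠ 0 → |τ| < (ε / 8) * ‖ξ‖ →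
      (∃ ω₁ : EuclideanSpace ℝ (Fin n), ‖ω₁‖ = 1 ∧ ‖ω₁ - ω₀‖ < ε / 4 ∧ ⟪ξ, ω₁⟫ = 0) →
      ∃ ω : EuclideanSpace ℝ (Fin n),
        ‖ω‖ = 1 ∧ ‖ω - ω₀‖ ≤ ε / 2 ∧ ⟪ω, ξ⟫ = τ ∧
        ‖∫ p : ℝ × EuclideanSpace ℝ (Fin n),
            Complex.exp (-Complex.I * ((p.1 * τ + ⟪p.2, ξ⟫ : ℝ) : ℂ)) *
              (((A 0 p : ℝ) : ℂ) - ∑ k : Fin n, (ω k : ℂ) * ((A k.succ p : ℝ) : ℂ))‖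
          ≤ (volume {x : EuclideanSpace ℝ (Fin n) | Metric.infDist x Ω ≤ T}).toReal * δ := by
  intro τ ξ hξ hτ ⟨ω₁, hω₁, hω₁ω₀, hξω₁⟩
  obtain ⟨ω, hω, hωξ, hωω₀⟩ :=
    exists_norm_eq_one_inner_eq_of_norm_sub_lt hε1 hξ hω₁ hω₁ω₀ hξω₁ hτ
  refine ⟨ω, hω, hωω₀.le, hωξ, ?_⟩
  set g := nullComponent A ω
  have hg_supp : support g ⊆ Ioo 0 T ×ˢ Ω :=
    support_nullComponent_subset (fun i => (subset_tsupport _).trans (hAsupp i)) ω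
  have hg_int : Integrable g :=
    (continuous_nullComponent hA ω).integrable_of_hasCompactSupport
      (((isBounded_Ioo 0 T).prod hΩbdd).isCompact_closure.of_isClosed_subset isClosed_closure
        (closure_mono hg_supp))
  have hg_ofReal : ∀ p, ((A 0 p : ℝ) : ℂ) - ∑ k : Fin n, (ω k : ℂ) * ((A k.succ p : ℝ) : ℂ) =
      (g p : ℂ) := fun p => by push_cast [g, nullComponent]; rfl
  simp_rw [hg_ofReal]
  rw [Measure.volume_eq_prod,
    integral_exp_mul_eq_integral_exp_mul_lightRayTransform volume hg_int hωξ, mul_comm]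
  calc _ ≤ δ * volume.real (cthickening T Ω) :=
        norm_integral_exp_mul_lightRayTransform_le volume
          (hg_supp.trans (prod_mono Ioo_subset_Icc_self subset_rfl)) hΩbdd hω.le
          (hray ω hω hωω₀) ξ
    _ ≤ δ * volume.real {x | infDist x Ω ≤ T} := mul_le_mul_of_nonneg_left
        (measureReal_cthickening_le_measureReal_setOf_infDist_le volume Ω hT.le) hδ

/-- **Corollary 2 of the paper (quantitative form)**: if the light-ray transform of the
vector potential `A` is bounded by `δ` uniformly over directions `ω` in the partial-data
cap `|ω − ω₀| < ε/2`, then for every frequency `(τ,ξ)` with `ξ ≠ 0` orthogonal to some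
unit vector `ω₁` with `|ω₁ − ω₀| < ε/4` and `|τ| < (ε/8)|ξ|`, there is a unit vector `ω`
with `|ω − ω₀| ≤ ε/2` and `ω·ξ = τ` such that `|(1,−ω)·Â(τ,ξ)| ≤ μ(Ω_T) δ`, where
`Ω_T = {x : dist(x,Ω) ≤ T}`. -/
theorem lightray_bound_implies_fourier_bound
    (n : ℕ) (hn : 2 ≤ n) (ε : ℝ) (hε0 : 0 < ε) (hε1 : ε ≤ 1)
    (T : ℝ) (hT : 0 < T)
    (Ω : Set (EuclideanSpace ℝ (Fin n))) (hΩopen : IsOpen Ω)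
    (hΩbdd : Bornology.IsBounded Ω)
    (ω₀ : EuclideanSpace ℝ (Fin n)) (hω₀ : ‖ω₀‖ = 1)
    (A : Fin (n + 1) → ℝ × EuclideanSpace ℝ (Fin n) → ℝ)
    (hA : ∀ i, Continuous (A i))
    (hAsupp : ∀ i, tsupport (A i) ⊆ Set.Ioo (0 : ℝ) T ×ˢ Ω)
    (δ : ℝ) (hδ : 0 ≤ δ)
    (hray : ∀ ω : EuclideanSpace ℝ (Fin n), ‖ω‖ = 1 → ‖ω - ω₀‖ < ε / 2 →
      ∀ x : EuclideanSpace ℝ (Fin n),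
        |∫ s : ℝ, (A 0 (s, x - s • ω) - ∑ k : Fin n, ω k * A k.succ (s, x - s • ω))| ≤ δ) :
    ∀ (τ : ℝ) (ξ : EuclideanSpace ℝ (Fin n)),
      ξ ≠ 0 → |τ| < (ε / 8) * ‖ξ‖ →
      (∃ ω₁ : EuclideanSpace ℝ (Fin n), ‖ω₁‖ = 1 ∧ ‖ω₁ - ω₀‖ < ε / 4 ∧ ⟪ξ, ω₁⟫ = 0) →
      ∃ ω : EuclideanSpace ℝ (Fin n),
        ‖ω‖ = 1 ∧ ‖ω - ω₀‖ ≤ ε / 2 ∧ ⟪ω, ξ⟫ = τ ∧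
        ‖∫ p : ℝ × EuclideanSpace ℝ (Fin n),
            Complex.exp (-Complex.I * ((p.1 * τ + ⟪p.2, ξ⟫ : ℝ) : ℂ)) *
              (((A 0 p : ℝ) : ℂ) - ∑ k : Fin n, (ω k : ℂ) * ((A k.succ p : ℝ) : ℂ))‖
          ≤ (volume {x : EuclideanSpace ℝ (Fin n) | Metric.infDist x Ω ≤ T}).toReal * δ :=
  lightray_bound_implies_fourier_bound_general n ε hε1 T hT Ω hΩbdd ω₀ A hA hAsupp δ hδ hray
end
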